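/- Define V(α, γ_s) = ∫_{Φ^{-1}(1−α)}^∞ Φ((γ_s·z + c)/√(1−γ_s²))·φ(z) dz with constant c ∈ ℝ, γ_s ∈ (0,1), α ∈ (0,1), and write γ_t = √(1−γ_s²). Then ∂V/∂γ_s = (1/γ_t)·φ(c)·φ((Φ^{-1}(1−α) + c·γ_s)/γ_t). -/

import Mathlib

noncomputable def phi (x : ℝ) : ℝ := (Real.sqrt (2 * Real.pi))⁻¹ * Real.exp (-x ^ 2 / 2)

noncomputable def Phi (t : ℝ) : ℝ := ∫ z in Set.Iic t, phi z

/-- The standard normal quantile function. -/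
noncomputable def Phiinv (p : ℝ) : ℝ := sInf {t : ℝ | p ≤ Phi t}

/-!
Differentiating under the integral sign gives the integrand
`φ((γ z + c)/γₜ) · (z + γ c)/γₜ³ · φ(z)`, dominated by a multiple of `(|z| + |c|) φ(z)` uniformly
for `γ` near `γₛ`.
Completing the square, `φ((γ z + c)/γₜ) φ(z) = φ(c) φ((z + γ c)/γₜ)` when `γ² + γₜ² = 1`, so the
integrand is `φ(c)/γₜ` times the derivative of `-φ((z + γ c)/γₜ)`, and the integral over
`(Φ⁻¹(1-α), ∞)` is its boundary value at the left endpoint.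
-/

open MeasureTheory ProbabilityTheory Real Set Filter Topology

lemma phi_eq_gaussianPDFReal : phi = gaussianPDFReal 0 1 := by
  ext x
  simp [phi, gaussianPDFReal]

lemma phi_pos (x : ℝ) : 0 < phi x := by
  unfold phi
  positivity

lemma phi_le_one (x : ℝ) : phi x ≤ 1 := by
  have hexp : exp (-x ^ 2 / 2) ≤ 1 := exp_le_one_iff.2 (by nlinarith [sq_nonneg x])
  have hconst : (√(2 * π))⁻¹ ≤ 1 :=
    inv_le_one_of_one_le₀ (one_le_sqrt.2 (by linarith [pi_gt_three]))
  exact mul_le_one₀ hconst (exp_pos _).le hexp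

@[fun_prop]
lemma continuous_phi : Continuous phi := by
  unfold phi
  fun_prop

lemma integrable_phi : Integrable phi :=
  phi_eq_gaussianPDFReal ▸ integrable_gaussianPDFReal 0 1

lemma integral_phi : ∫ x, phi x = 1 := by
  rw [phi_eq_gaussianPDFReal]
  exact integral_gaussianPDFReal_eq_one 0 one_ne_zero

lemma integrable_mul_phi : Integrable fun x => x * phi x := by
  refine ((integrable_mul_exp_neg_mul_sq (by norm_num : (0 : ℝ) < 1 / 2)).const_mul
    (√(2 * π))⁻¹).congr (Eventually.of_forall fun x => ?_)
  simp only [phi]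
  ring_nf

lemma hasDerivAt_phi (x : ℝ) : HasDerivAt phi (-x * phi x) x := by
  have hexponent : HasDerivAt (fun x : ℝ => -x ^ 2 / 2) (-x) x := by
    exact ((hasDerivAt_pow 2 x).neg.div_const 2).congr_deriv (by ring)
  refine (hexponent.exp.const_mul (√(2 * π))⁻¹).congr_deriv ?_
  simp only [phi]
  ring

lemma tendsto_phi_atTop : Tendsto phi atTop (𝓝 0) := by
  have hexponent : Tendsto (fun x : ℝ => -x ^ 2 / 2) atTop atBot :=
    (tendsto_neg_atBot_iff.2 (tendsto_pow_atTop two_ne_zero)).atBot_div_const two_pos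
  have h := (tendsto_exp_atBot.comp hexponent).const_mul (√(2 * π))⁻¹
  rwa [mul_zero] at h

lemma Phi_nonneg (t : ℝ) : 0 ≤ Phi t :=
  integral_nonneg fun x => (phi_pos x).le

lemma Phi_le_one (t : ℝ) : Phi t ≤ 1 :=
  integral_phi ▸ setIntegral_le_integral integrable_phi (Eventually.of_forall fun x => (phi_pos x).le)

lemma hasDerivAt_Phi (t : ℝ) : HasDerivAt Phi (phi t) t := by
  have hPhi : ∀ s, Phi s = Phi 0 + ∫ x in (0 : ℝ)..s, phi x := fun s => by
    rw [← intervalIntegral.integral_Iic_sub_Iic integrable_phi.integrableOn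
      integrable_phi.integrableOn, Phi, Phi]
    ring
  refine (HasDerivAt.const_add _ ?_).congr_of_eventuallyEq (Eventually.of_forall hPhi)
  exact intervalIntegral.integral_hasDerivAt_right integrable_phi.intervalIntegrable
    (continuous_phi.stronglyMeasurableAtFilter _ _) continuous_phi.continuousAt

@[fun_prop]
lemma continuous_Phi : Continuous Phi :=
  continuous_iff_continuousAt.2 fun t => (hasDerivAt_Phi t).continuousAt

lemma phi_mul_phi_eq {g t : ℝ} (ht : t ≠ 0) (hgt : g ^ 2 + t ^ 2 = 1) (z c : ℝ) :
    phi ((g * z + c) / t) * phi z = phi c * phi ((z + g * c) / t) := by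
  simp only [phi]
  rw [mul_mul_mul_comm, ← exp_add, mul_mul_mul_comm, ← exp_add]
  congr 2
  field_simp
  linear_combination (c ^ 2 - z ^ 2) * hgt

lemma hasDerivAt_mul_add_div_sqrt_one_sub_sq (z c : ℝ) {g : ℝ} (hg : g ^ 2 < 1) :
    HasDerivAt (fun g : ℝ => (g * z + c) / √(1 - g ^ 2)) ((z + g * c) / √(1 - g ^ 2) ^ 3) g := by
  have hpos : 0 < 1 - g ^ 2 := by linarith
  have hnum : HasDerivAt (fun g : ℝ => g * z + c) z g := by
    simpa using (hasDerivAt_mul_const z).add_const c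
  have hden : HasDerivAt (fun g : ℝ => √(1 - g ^ 2)) (-(2 * g) / (2 * √(1 - g ^ 2))) g := by
    simpa using ((hasDerivAt_pow 2 g).const_sub 1).sqrt hpos.ne'
  refine (hnum.div hden (sqrt_pos.2 hpos).ne').congr_deriv ?_
  have hsq : √(1 - g ^ 2) ^ 2 = 1 - g ^ 2 := sq_sqrt hpos.le
  field_simp
  linear_combination z * hsq

lemma integral_Ioi_mul_phi_div {t : ℝ} (ht : 0 < t) (a b : ℝ) :
    ∫ z in Ioi a, (z + b) / t ^ 2 * phi ((z + b) / t) = phi ((a + b) / t) := by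
  have hderiv : ∀ z, HasDerivAt (fun z => -phi ((z + b) / t))
      ((z + b) / t ^ 2 * phi ((z + b) / t)) z := fun z => by
    have hlin : HasDerivAt (fun z => (z + b) / t) (1 / t) z := by
      simpa using ((hasDerivAt_id z).add_const b).div_const t
    refine ((hasDerivAt_phi _).comp z hlin).neg.congr_deriv ?_
    field_simp
  have hint : Integrable fun z => (z + b) / t ^ 2 * phi ((z + b) / t) := by
    refine (((integrable_mul_phi.comp_div ht.ne').comp_add_right b).const_mul t⁻¹).congr
      (Eventually.of_forall fun z => ?_)
    field_simp
  have htendsto : Tendsto (fun z => -phi ((z + b) / t)) atTop (𝓝 0) := by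
    simpa using (tendsto_phi_atTop.comp
      ((tendsto_atTop_add_const_right _ b tendsto_id).atTop_div_const ht)).neg
  rw [integral_Ioi_of_hasDerivAt_of_tendsto' (fun z _ => hderiv z) hint.integrableOn htendsto]
  ring

lemma abs_deriv_integrand_le {M x : ℝ} (hM : M < 1) (hx : |x| ≤ M) (z c : ℝ) :
    |phi ((x * z + c) / √(1 - x ^ 2)) * ((z + x * c) / √(1 - x ^ 2) ^ 3) * phi z| ≤
      (|z| + |c|) / √(1 - M ^ 2) ^ 3 * phi z := by
  have hM0 : 0 ≤ M := (abs_nonneg x).trans hx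
  have hδ : 0 < √(1 - M ^ 2) := sqrt_pos.2 (by nlinarith)
  have hδle : √(1 - M ^ 2) ≤ √(1 - x ^ 2) :=
    sqrt_le_sqrt (by nlinarith [sq_abs x, abs_nonneg x])
  have hnum : |z + x * c| ≤ |z| + |c| := by
    calc |z + x * c| ≤ |z| + |x| * |c| := (abs_add_le _ _).trans_eq (by rw [abs_mul])
      _ ≤ |z| + |c| := by nlinarith [abs_nonneg c]
  have hfrac : |(z + x * c) / √(1 - x ^ 2) ^ 3| ≤ (|z| + |c|) / √(1 - M ^ 2) ^ 3 := by
    rw [abs_div, abs_of_nonneg (pow_nonneg (sqrt_nonneg (1 - x ^ 2)) 3)]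
    exact div_le_div₀ (by positivity) hnum (by positivity) (pow_le_pow_left₀ hδ.le hδle 3)
  rw [abs_mul, abs_mul, abs_of_pos (phi_pos _), abs_of_pos (phi_pos z)]
  calc phi ((x * z + c) / √(1 - x ^ 2)) * |(z + x * c) / √(1 - x ^ 2) ^ 3| * phi z
      ≤ 1 * ((|z| + |c|) / √(1 - M ^ 2) ^ 3) * phi z := by
        gcongr
        · exact (phi_pos _).le
        · exact phi_le_one _
    _ = (|z| + |c|) / √(1 - M ^ 2) ^ 3 * phi z := by ring

lemma hasDerivAt_setIntegral_Phi_mul_phi (s : Set ℝ) (c : ℝ) {g₀ : ℝ} (hg₀ : |g₀| < 1) :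
    HasDerivAt (fun g : ℝ => ∫ z in s, Phi ((g * z + c) / √(1 - g ^ 2)) * phi z)
      (∫ z in s, phi ((g₀ * z + c) / √(1 - g₀ ^ 2)) * ((z + g₀ * c) / √(1 - g₀ ^ 2) ^ 3) *
        phi z) g₀ := by
  set M := (1 + |g₀|) / 2 with hM_def
  have hM : M < 1 := by linarith
  have hnhds : Icc (-M) M ∈ 𝓝 g₀ :=
    Icc_mem_nhds (by linarith [neg_abs_le g₀]) (by linarith [le_abs_self g₀])
  have hsq : ∀ x ∈ Icc (-M) M, x ^ 2 < 1 := fun x hx => by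
    nlinarith [sq_abs x, abs_nonneg x, abs_le.2 hx]
  have hmeas : ∀ g, AEStronglyMeasurable
      (fun z => Phi ((g * z + c) / √(1 - g ^ 2)) * phi z) (volume.restrict s) := fun g => by fun_prop
  have hint : Integrable (fun z => Phi ((g₀ * z + c) / √(1 - g₀ ^ 2)) * phi z)
      (volume.restrict s) := by
    refine integrable_phi.restrict.mono (hmeas g₀) (Eventually.of_forall fun z => ?_)
    rw [norm_mul, norm_of_nonneg (Phi_nonneg _)]
    exact mul_le_of_le_one_left (norm_nonneg _) (Phi_le_one _)
  have hbound : Integrable (fun z => (|z| + |c|) / √(1 - M ^ 2) ^ 3 * phi z) :=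
    ((integrable_mul_phi.abs.add (integrable_phi.const_mul |c|)).div_const
      (√(1 - M ^ 2) ^ 3)).congr (Eventually.of_forall fun z => by
        simp only [Pi.add_apply, abs_mul, abs_of_pos (phi_pos z)]
        ring)
  have hdiff : ∀ z, ∀ x ∈ Icc (-M) M,
      HasDerivAt (fun g => Phi ((g * z + c) / √(1 - g ^ 2)) * phi z)
        (phi ((x * z + c) / √(1 - x ^ 2)) * ((z + x * c) / √(1 - x ^ 2) ^ 3) * phi z) x :=
    fun z x hx => ((hasDerivAt_Phi _).comp x
      (hasDerivAt_mul_add_div_sqrt_one_sub_sq z c (hsq x hx))).mul_const (phi z)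
  refine (hasDerivAt_integral_of_dominated_loc_of_deriv_le hnhds (Eventually.of_forall hmeas)
    hint (by fun_prop) ?_ hbound.restrict (Eventually.of_forall hdiff)).2
  exact Eventually.of_forall fun z x hx =>
    (norm_eq_abs _).trans_le (abs_deriv_integrand_le hM (abs_le.2 hx) z c)

theorem probit_value_deriv_gamma_general (c γs α : ℝ) (hγs : γs ∈ Set.Ioo (0 : ℝ) 1) :
    HasDerivAt
      (fun g : ℝ => ∫ z in Set.Ioi (Phiinv (1 - α)),
        Phi ((g * z + c) / Real.sqrt (1 - g ^ 2)) * phi z)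
      ((1 / Real.sqrt (1 - γs ^ 2)) * phi c *
        phi ((Phiinv (1 - α) + c * γs) / Real.sqrt (1 - γs ^ 2))) γs := by
  obtain ⟨hγ0, hγ1⟩ := hγs
  set a := Phiinv (1 - α)
  set t := √(1 - γs ^ 2)
  have ht : 0 < t := sqrt_pos.2 (by nlinarith)
  have hγt : γs ^ 2 + t ^ 2 = 1 := by rw [sq_sqrt (by nlinarith)]; ring
  convert hasDerivAt_setIntegral_Phi_mul_phi (Ioi a) c (abs_lt.2 ⟨by linarith, hγ1⟩) using 1
  calc 1 / t * phi c * phi ((a + c * γs) / t)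
      = phi c / t * ∫ z in Ioi a, (z + γs * c) / t ^ 2 * phi ((z + γs * c) / t) := by
        rw [integral_Ioi_mul_phi_div ht, mul_comm c γs]
        ring
    _ = ∫ z in Ioi a, phi ((γs * z + c) / t) * ((z + γs * c) / t ^ 3) * phi z := by
        rw [← integral_const_mul]
        congr 1 with z
        rw [mul_right_comm, phi_mul_phi_eq ht.ne' hγt]
        field_simp

/-- Partial derivative in `γ_s` of the probit value function
`V(α, γ_s) = ∫_{Φ⁻¹(1-α)}^∞ Φ((γ_s z + c)/√(1-γ_s²)) φ(z) dz` equals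
`(1/γ_t) φ(c) φ((Φ⁻¹(1-α) + c γ_s)/γ_t)` where `γ_t = √(1-γ_s²)`. -/
theorem probit_value_deriv_gamma (c γs α : ℝ) (hγs : γs ∈ Set.Ioo (0 : ℝ) 1)
    (hα : α ∈ Set.Ioo (0 : ℝ) 1) :
    HasDerivAt
      (fun g : ℝ => ∫ z in Set.Ioi (Phiinv (1 - α)),
        Phi ((g * z + c) / Real.sqrt (1 - g ^ 2)) * phi z)
      ((1 / Real.sqrt (1 - γs ^ 2)) * phi c *
        phi ((Phiinv (1 - α) + c * γs) / Real.sqrt (1 - γs ^ 2))) γs :=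
  probit_value_deriv_gamma_general c γs α hγs
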